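/- Let $\zeta = e^{2\pi i/3}$ and let $S_3$ be the $6\times 6$ matrix $\begin{pmatrix}\zeta&0&0&0&0&0\\0&\zeta^{-1}&0&0&0&0\\0&0&-\zeta^{-1}/2&0&0&-(1-\zeta)/2\\0&0&0&\zeta&0&0\\0&0&0&0&\zeta&0\\0&0&-(1-\zeta)/2&0&0&-\zeta^{-1}/2\end{pmatrix}$ and $W_{27} = \mathrm{diag}(-1,-1,1,1,-1,-1)$. Then the matrix $\tau_3 = S_3 W_{27} S_3 W_{27}$ is diagonal with each diagonal entry equal to $\zeta$ or $\zeta^{-1}$, and $\tau_3^3 = I$. -/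

import Mathlib

/-!
Apart from the block on `e₇, e₁₀`, which has the shape `[[a, -b], [b, -a]]`, the matrix `S₃ W₂₇`
is diagonal with entries `±ζ^{±1}`. The block squares to `(a² - b²) I`, and writing
`ζ⁻¹ = -1 - ζ` gives `a² - b² = ((1 + ζ)² - (1 - ζ)²) / 4 = ζ`. Hence `τ₃ = (S₃ W₂₇)²` is diagonal
with entries `ζ^{±1}`, all of which are cube roots of unity.
-/

open Matrix

namespace Stmt8

/-- `ζ = e^{2πi/3}`. -/
noncomputable def ζ : ℂ := Complex.exp (2 * Real.pi * Complex.I / 3)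

/-- The action of `S₃` on the CM subspace `W` of weight-2 cusp forms,
w.r.t. the basis `e₅, …, e₁₀`. -/
noncomputable def S3 : Matrix (Fin 6) (Fin 6) ℂ :=
  !![ζ, 0, 0, 0, 0, 0;
     0, ζ⁻¹, 0, 0, 0, 0;
     0, 0, -ζ⁻¹/2, 0, 0, -(1-ζ)/2;
     0, 0, 0, ζ, 0, 0;
     0, 0, 0, 0, ζ, 0;
     0, 0, -(1-ζ)/2, 0, 0, -ζ⁻¹/2]

/-- The action of `w₂₇` on `W`. -/
noncomputable def W27 : Matrix (Fin 6) (Fin 6) ℂ :=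
  !![-1,0,0,0,0,0; 0,-1,0,0,0,0; 0,0,1,0,0,0; 0,0,0,1,0,0; 0,0,0,0,-1,0; 0,0,0,0,0,-1]

/-- `τ₃ = S₃ W₂₇ S₃ W₂₇`. -/
noncomputable def τ3 : Matrix (Fin 6) (Fin 6) ℂ := S3 * W27 * S3 * W27

end Stmt8

theorem Matrix.IsDiag.pow_eq_one {n R : Type*} [Fintype n] [DecidableEq n] [Semiring R]
    {A : Matrix n n R} (hA : A.IsDiag) {k : ℕ} (h : ∀ i, A i i ^ k = 1) : A ^ k = 1 := by
  rw [← hA.diagonal_diag, diagonal_pow, ← diagonal_one]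
  exact congrArg diagonal (funext h)

namespace Stmt8

theorem isPrimitiveRoot_ζ : IsPrimitiveRoot ζ 3 := by
  simpa [ζ] using Complex.isPrimitiveRoot_exp 3 (by norm_num)

theorem ζ_pow_three : ζ ^ 3 = 1 :=
  isPrimitiveRoot_ζ.pow_eq_one

theorem ζ_sq_add_ζ_add_one : ζ ^ 2 + ζ + 1 = 0 := by
  have h := isPrimitiveRoot_ζ.geom_sum_eq_zero (by norm_num)
  rw [Finset.sum_range_succ, Finset.sum_range_succ, Finset.sum_range_one] at h
  linear_combination h

theorem inv_ζ : ζ⁻¹ = -1 - ζ :=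
  inv_eq_of_mul_eq_one_right (by linear_combination -ζ_sq_add_ζ_add_one)

theorem S3_mul_W27 : S3 * W27 =
    !![-ζ, 0, 0, 0, 0, 0;
       0, -ζ⁻¹, 0, 0, 0, 0;
       0, 0, -ζ⁻¹/2, 0, 0, (1-ζ)/2;
       0, 0, 0, ζ, 0, 0;
       0, 0, 0, 0, -ζ, 0;
       0, 0, -(1-ζ)/2, 0, 0, ζ⁻¹/2] := by
  ext i j
  fin_cases i <;> fin_cases j <;> simp [S3, W27, mul_apply, Fin.sum_univ_six] <;> ring

theorem τ3_eq_diagonal : τ3 = diagonal ![ζ⁻¹, ζ, ζ, ζ⁻¹, ζ⁻¹, ζ] := by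
  rw [τ3, Matrix.mul_assoc (S3 * W27), S3_mul_W27]
  ext i j
  fin_cases i <;> fin_cases j <;> simp [mul_apply, Fin.sum_univ_six, inv_ζ] <;>
    grind [ζ_sq_add_ζ_add_one]

/-- `τ₃` is diagonal with each diagonal entry equal to `ζ` or `ζ⁻¹`, and `τ₃³ = I`. -/
theorem tau3_diagonal_and_order_three :
    (∀ i j : Fin 6, i ≠ j → τ3 i j = 0) ∧
    (∀ i : Fin 6, τ3 i i = ζ ∨ τ3 i i = ζ⁻¹) ∧
    τ3 ^ 3 = 1 := by
  have hdiag : τ3.IsDiag := by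
    rw [τ3_eq_diagonal]
    exact isDiag_diagonal _
  have hentries : ∀ i, τ3 i i = ζ ∨ τ3 i i = ζ⁻¹ := fun i => by
    rw [τ3_eq_diagonal, diagonal_apply_eq]
    fin_cases i <;> simp
  refine ⟨fun _ _ hij => hdiag hij, hentries, hdiag.pow_eq_one fun i => ?_⟩
  rcases hentries i with h | h <;> rw [h]
  · exact ζ_pow_three
  · rw [inv_pow, ζ_pow_three, inv_one]

end Stmt8
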